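/- Let N ∈ ℕ, d > 0, and let A̲ be any real N×N matrix. Let B be the N²×N² nonbacktracking matrix associated with d^{−1/2}·A̲, i.e. the matrix with entries B_{ef} := d^{−1/2}·A̲_{uv}·1_{y = u}·1_{x ≠ v} for e = (x, y) ∈ [N]² and f = (u, v) ∈ [N]². Let t ∈ ℂ satisfy t² ≠ d^{−1}·A̲_{xy}·A̲_{yx} for all x, y ∈ [N]. Define the N×N matrix A̲(t) with entries A̲(t)_{xy} := t·√d·A̲_{xy}/(t²·d − A̲_{xy}·A̲_{yx}), and the diagonal N×N matrix M(t) with diagonal entries m_x(t) := 1 + Σ_{y∈[N]} A̲_{xy}·A̲_{yx}/(t²·d − A̲_{xy}·A̲_{yx}). Then t is an eigenvalue of B (as a complex matrix) if and only if det(M(t) − A̲(t)) = 0. -/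

import Mathlib

open Matrix

noncomputable section

/-! With `h = d^{-1/2} A̲`, split `B = P Q - J`, where `J` is the backtracking matrix
`J_{(x,y),(y,x)} = h_{yx}`, `P_{(x,y),z} = 1_{y = z}` and `Q_{z,(u,v)} = 1_{z = u} h_{uv}`.
Then `B - t = -(t + J) + P Q`. Since `J²` is diagonal, `(t + J)(t - J) = t² - J²` is diagonal
with entries `t² - h_{xy} h_{yx}`, so `t + J` is invertible under the hypothesis on `t`, and the
matrix determinant lemma `det (A + P Q) = det A · det (1 + Q A⁻¹ P)` trades the `N² × N²`
determinant for the `N × N` determinant of `1 - Q (t + J)⁻¹ P = M(t) - A̲(t)`. -/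

namespace Matrix

variable {ι K : Type*} [Field K]

def iharaBassAdj (h : Matrix ι ι K) (t : K) : Matrix ι ι K :=
  of fun x y => t * h x y / (t ^ 2 - h x y * h y x)

theorem iharaBassAdj_inv_smul (h : Matrix ι ι K) (t : K) {c : K} (hc : c ≠ 0) :
    iharaBassAdj (c⁻¹ • h) t =
      of fun x y => t * c * h x y / (t ^ 2 * c ^ 2 - h x y * h y x) := by
  ext x y
  simp only [iharaBassAdj, of_apply, smul_apply, smul_eq_mul]
  rw [← mul_div_mul_right _ _ (pow_ne_zero 2 hc)]
  field_simp

variable [Fintype ι] [DecidableEq ι]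

def iharaBassDeg (h : Matrix ι ι K) (t : K) : Matrix ι ι K :=
  diagonal fun x => 1 + ∑ y, h x y * h y x / (t ^ 2 - h x y * h y x)

theorem iharaBassDeg_inv_smul (h : Matrix ι ι K) (t : K) {c : K} (hc : c ≠ 0) :
    iharaBassDeg (c⁻¹ • h) t =
      diagonal fun x => 1 + ∑ y, h x y * h y x / (t ^ 2 * c ^ 2 - h x y * h y x) := by
  refine congrArg diagonal (funext fun x => congrArg (1 + ·) (Finset.sum_congr rfl fun y _ => ?_))
  simp only [smul_apply, smul_eq_mul]
  rw [← mul_div_mul_right _ _ (pow_ne_zero 2 hc)]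
  field_simp

def nonbacktracking (h : Matrix ι ι K) : Matrix (ι × ι) (ι × ι) K :=
  of fun e f => h f.1 f.2 * (if e.2 = f.1 then 1 else 0) * (if e.1 ≠ f.2 then 1 else 0)

def backtracking (h : Matrix ι ι K) : Matrix (ι × ι) (ι × ι) K :=
  of fun e f => if f = e.swap then h e.2 e.1 else 0

variable (ι K) in
def headIncidence : Matrix (ι × ι) ι K :=
  of fun e z => if e.2 = z then 1 else 0

def tailIncidence (h : Matrix ι ι K) : Matrix ι (ι × ι) K :=
  of fun z f => if z = f.1 then h f.1 f.2 else 0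

variable (h : Matrix ι ι K) (t : K)

theorem headIncidence_mul_tailIncidence_apply (e f : ι × ι) :
    (headIncidence ι K * tailIncidence h) e f = if e.2 = f.1 then h f.1 f.2 else 0 := by
  simp [headIncidence, tailIncidence, mul_apply]

theorem nonbacktracking_eq :
    nonbacktracking h = headIncidence ι K * tailIncidence h - backtracking h := by
  ext ⟨x, y⟩ ⟨u, v⟩
  rw [sub_apply, headIncidence_mul_tailIncidence_apply]
  by_cases hyu : y = u <;> by_cases hxv : x = v <;>
    simp [nonbacktracking, backtracking, hyu, hxv, eq_comm]

theorem backtracking_mul_self :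
    backtracking h * backtracking h = diagonal fun e => h e.1 e.2 * h e.2 e.1 := by
  ext e f
  rw [mul_apply, Fintype.sum_eq_single e.swap]
  · by_cases hfe : f = e
    · simp [backtracking, hfe, mul_comm]
    · simp [backtracking, hfe, Ne.symm hfe]
  · intro g hg
    simp [backtracking, hg]

theorem backtracking_mul_apply {m : Type*} (X : Matrix (ι × ι) m K) (e : ι × ι) (w : m) :
    (backtracking h * X) e w = h e.2 e.1 * X e.swap w := by
  simp [backtracking, mul_apply]

theorem tailIncidence_mul_apply {m : Type*} (X : Matrix (ι × ι) m K) (z : ι) (w : m) :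
    (tailIncidence h * X) z w = ∑ v, h z v * X (z, v) w := by
  simp [tailIncidence, mul_apply, Fintype.sum_prod_type]

theorem smul_one_add_backtracking_mul_smul_one_sub :
    (t • 1 + backtracking h) * (t • 1 - backtracking h) =
      diagonal fun e => t ^ 2 - h e.1 e.2 * h e.2 e.1 := by
  rw [add_mul, mul_sub, mul_sub, backtracking_mul_self, smul_mul_smul, mul_one, smul_one_mul,
    mul_smul_one, sub_add_sub_cancel, smul_one_eq_diagonal, diagonal_sub, sq]

def backtrackingInv (h : Matrix ι ι K) (t : K) : Matrix (ι × ι) (ι × ι) K :=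
  (t • 1 - backtracking h) * diagonal fun e => (t ^ 2 - h e.1 e.2 * h e.2 e.1)⁻¹

theorem neg_smul_one_add_backtracking_mul_neg_backtrackingInv
    (hD : ∀ x y, t ^ 2 - h x y * h y x ≠ 0) :
    -(t • 1 + backtracking h) * -backtrackingInv h t = 1 := by
  rw [neg_mul_neg, backtrackingInv, ← Matrix.mul_assoc,
    smul_one_add_backtracking_mul_smul_one_sub, diagonal_mul_diagonal, ← diagonal_one]
  exact congrArg diagonal (funext fun e => mul_inv_cancel₀ (hD e.1 e.2))

theorem tailIncidence_mul_backtrackingInv_mul_headIncidence :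
    tailIncidence h * backtrackingInv h t * headIncidence ι K =
      iharaBassAdj h t - (iharaBassDeg h t - 1) := by
  ext z w
  have hterm : ∀ v, h z v * (t * ((t ^ 2 - h z v * h v z)⁻¹ * if v = w then 1 else 0) -
      h v z * ((t ^ 2 - h v z * h z v)⁻¹ * if z = w then 1 else 0)) =
      (if v = w then t * h z v / (t ^ 2 - h z v * h v z) else 0) -
        if z = w then h z v * h v z / (t ^ 2 - h z v * h v z) else 0 := by
    intro v
    rw [mul_comm (h v z) (h z v)]
    split_ifs <;> ring
  rw [backtrackingInv, Matrix.mul_assoc, Matrix.mul_assoc, tailIncidence_mul_apply]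
  simp only [Matrix.sub_mul, Matrix.smul_mul, Matrix.one_mul, sub_apply, smul_apply,
    backtracking_mul_apply, diagonal_mul, headIncidence, of_apply, smul_eq_mul, Prod.swap_prod_mk,
    hterm, Finset.sum_sub_distrib, Finset.sum_ite_eq', Finset.mem_univ, if_true]
  by_cases hzw : z = w
  · subst hzw
    simp [iharaBassAdj, iharaBassDeg]
  · simp [iharaBassAdj, iharaBassDeg, hzw]

theorem det_nonbacktracking_sub_smul_one (hD : ∀ x y, t ^ 2 - h x y * h y x ≠ 0) :
    det (nonbacktracking h - t • 1) =
      det (-(t • 1 + backtracking h)) * det (iharaBassDeg h t - iharaBassAdj h t) := by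
  have hinv := neg_smul_one_add_backtracking_mul_neg_backtrackingInv h t hD
  have hsplit : nonbacktracking h - t • 1 =
      -(t • 1 + backtracking h) + headIncidence ι K * tailIncidence h := by
    rw [nonbacktracking_eq]
    abel
  rw [hsplit, det_add_mul _ _ (isUnit_det_of_right_inverse hinv), inv_eq_right_inv hinv,
    Matrix.mul_neg, Matrix.neg_mul, tailIncidence_mul_backtrackingInv_mul_headIncidence]
  congr 2
  abel

theorem det_nonbacktracking_sub_smul_one_eq_zero_iff (hD : ∀ x y, t ^ 2 - h x y * h y x ≠ 0) :
    det (nonbacktracking h - t • 1) = 0 ↔ det (iharaBassDeg h t - iharaBassAdj h t) = 0 := by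
  rw [det_nonbacktracking_sub_smul_one h t hD, (isUnit_det_of_right_inverse
    (neg_smul_one_add_backtracking_mul_neg_backtrackingInv h t hD)).mul_right_eq_zero]

end Matrix

/-- Lemma 5.4 of the paper, Ihara–Bass-type formula: `t` is an eigenvalue
of the nonbacktracking matrix `B` of `d^{-1/2} A̲` if and only if `det(M(t) − A̲(t)) = 0`. -/
theorem statement12 (N : ℕ) (d : ℝ) (hd : 0 < d) (Au : Matrix (Fin N) (Fin N) ℝ)
    (t : ℂ) (ht : ∀ x y : Fin N, t ^ 2 ≠ ((Au x y * Au y x : ℝ) : ℂ) / (d : ℂ))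
    (B : Matrix (Fin N × Fin N) (Fin N × Fin N) ℂ)
    (hB : B = Matrix.of fun e f : Fin N × Fin N =>
      ((Real.sqrt d : ℝ) : ℂ)⁻¹ * ((Au f.1 f.2 : ℝ) : ℂ) *
        (if e.2 = f.1 then 1 else 0) * (if e.1 ≠ f.2 then 1 else 0))
    (At : Matrix (Fin N) (Fin N) ℂ)
    (hAt : At = Matrix.of fun x y : Fin N =>
      t * ((Real.sqrt d : ℝ) : ℂ) * ((Au x y : ℝ) : ℂ) /
        (t ^ 2 * (d : ℂ) - ((Au x y : ℝ) : ℂ) * ((Au y x : ℝ) : ℂ)))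
    (Mt : Matrix (Fin N) (Fin N) ℂ)
    (hMt : Mt = Matrix.diagonal fun x : Fin N =>
      1 + ∑ y : Fin N, ((Au x y : ℝ) : ℂ) * ((Au y x : ℝ) : ℂ) /
        (t ^ 2 * (d : ℂ) - ((Au x y : ℝ) : ℂ) * ((Au y x : ℝ) : ℂ))) :
    Matrix.det (B - t • (1 : Matrix (Fin N × Fin N) (Fin N × Fin N) ℂ)) = 0 ↔
      Matrix.det (Mt - At) = 0 := by
  set s : ℂ := ((Real.sqrt d : ℝ) : ℂ)
  have hs : s ≠ 0 := Complex.ofReal_ne_zero.mpr (Real.sqrt_pos.mpr hd).ne'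
  have hs2 : s ^ 2 = d := by simp [s, ← Complex.ofReal_pow, Real.sq_sqrt hd.le]
  set a : Matrix (Fin N) (Fin N) ℂ := Au.map (↑)
  have hD : ∀ x y, t ^ 2 - (s⁻¹ • a) x y * (s⁻¹ • a) y x ≠ 0 := by
    intro x y
    refine sub_ne_zero.mpr ?_
    convert ht x y using 1
    simp [a, ← hs2]
    ring
  rw [show B = nonbacktracking (s⁻¹ • a) from hB,
    show At = iharaBassAdj (s⁻¹ • a) t by rw [iharaBassAdj_inv_smul _ _ hs, hs2, hAt]; rfl,
    show Mt = iharaBassDeg (s⁻¹ • a) t by rw [iharaBassDeg_inv_smul _ _ hs, hs2, hMt]; rfl]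
  exact det_nonbacktracking_sub_smul_one_eq_zero_iff _ t hD
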